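/- Let p ≥ 1 be an integer, M_p > 0, c > 0, let q be a real with 2 ≤ q ≤ p+1 and σ_q > 0. Let f : ℝ^n → ℝ be differentiable and uniformly convex of degree q with parameter σ_q, with global minimizer x*. Let z_0 ∈ ℝ^n and Δ_0 > 0 satisfy f(z_0) − f(x*) ≤ Δ_0, and for k ≥ 0 set Δ_k = Δ_0 · 2^{−k} and N_k = max{⌈(2 c M_p q^{(p+1)/q} σ_q^{−(p+1)/q} Δ_k^{(p+1−q)/q})^{2/(3p+1)}⌉, 1}. Suppose the sequence (z_k) satisfies, for every k ≥ 0, f(z_{k+1}) − f(x*) ≤ c M_p ∥z_k − x*∥^{p+1} / N_k^{(3p+1)/2}. Then for every k ≥ 0, (σ_q/q) ∥z_k − x*∥^q ≤ f(z_k) − f(x*) ≤ Δ_0 · 2^{−k}. -/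

import Mathlib

open scoped RealInnerProductSpace

/-! At a minimiser the gradient vanishes, so uniform convexity gives the growth bound
`(σ/q)‖z - x*‖^q ≤ f z - f x*`. If the gap at `z_k` is at most `Δ_k`, this bounds
`‖z_k - x*‖^{p+1}` by `(q Δ_k/σ)^{(p+1)/q}`, and `N_k` is chosen exactly so that the restart
guarantee then halves the gap: `c M_p (q Δ_k/σ)^{(p+1)/q} / N_k^{(3p+1)/2} ≤ Δ_k/2`. -/

/-- `f` is uniformly convex of degree `q` with parameter `σ`:
`f(y) ≥ f(x) + ⟨∇f(x), y - x⟩ + (σ/q)‖y - x‖^q` for all `x, y`. -/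
def UniformlyConvexDeg {n : ℕ} (q σ : ℝ) (f : EuclideanSpace ℝ (Fin n) → ℝ) : Prop :=
  ∀ x y : EuclideanSpace ℝ (Fin n),
    f y ≥ f x + ⟪gradient f x, y - x⟫ + (σ / q) * ‖y - x‖ ^ q

theorem IsLocalMin.gradient_eq_zero {F : Type*} [NormedAddCommGroup F] [InnerProductSpace ℝ F]
    [CompleteSpace F] {f : F → ℝ} {x : F} (h : IsLocalMin f x) : gradient f x = 0 := by
  simp [gradient, h.fderiv_eq_zero]

theorem UniformlyConvexDeg.growth_at_minimizer {n : ℕ} {q σ : ℝ}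
    {f : EuclideanSpace ℝ (Fin n) → ℝ} (hf : UniformlyConvexDeg q σ f)
    {xstar : EuclideanSpace ℝ (Fin n)} (hmin : ∀ w, f xstar ≤ f w) (y : EuclideanSpace ℝ (Fin n)) :
    σ / q * ‖y - xstar‖ ^ q ≤ f y - f xstar := by
  have h := hf xstar y
  rw [IsLocalMin.gradient_eq_zero (Filter.Eventually.of_forall hmin), inner_zero_left] at h
  linarith

theorem rpow_le_of_growth_le {q σ D r s : ℝ} (hq : 0 < q) (hσ : 0 < σ) (hr : 0 ≤ r) (hs : 0 ≤ s)
    (h : σ / q * r ^ q ≤ D) : r ^ s ≤ (q / σ * D) ^ (s / q) := by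
  have hrq : r ^ q ≤ q / σ * D := by
    rw [div_mul_eq_mul_div, le_div_iff₀ hσ]
    rw [div_mul_eq_mul_div, div_le_iff₀ hq] at h
    linarith
  calc r ^ s = (r ^ q) ^ (s / q) := by rw [← Real.rpow_mul hr, mul_div_cancel₀ s hq.ne']
    _ ≤ (q / σ * D) ^ (s / q) :=
      Real.rpow_le_rpow (by positivity) hrq (div_nonneg hs hq.le)

theorem div_mul_rpow_div_eq {q σ D s : ℝ} (hq : 0 < q) (hσ : 0 < σ) (hD : 0 < D) :
    (q / σ * D) ^ (s / q) = q ^ (s / q) * σ ^ (-(s / q)) * D ^ ((s - q) / q) * D := by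
  have hexp : s / q = (s - q) / q + 1 := by field_simp; ring
  rw [Real.mul_rpow (by positivity) hD.le, Real.div_rpow hq.le hσ.le, Real.rpow_neg hσ.le,
    div_eq_mul_inv, hexp, Real.rpow_add hD, Real.rpow_one, ← hexp]
  ring

theorem le_rpow_of_ceil_rpow_le {A a b : ℝ} {N : ℕ} (hA : 0 ≤ A) (hb : 0 < b) (hab : a * b = 1)
    (hN : ⌈A ^ a⌉₊ ≤ N) : A ≤ (N : ℝ) ^ b := by
  calc A = (A ^ a) ^ b := by rw [← Real.rpow_mul hA, hab, Real.rpow_one]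
    _ ≤ (N : ℝ) ^ b :=
      Real.rpow_le_rpow (by positivity) ((Nat.le_ceil _).trans (by exact_mod_cast hN)) hb.le

theorem restart_halves_gap {p : ℕ} {c Mp q σ D r F : ℝ} {N : ℕ} (hc : 0 < c) (hMp : 0 < Mp)
    (hq : 0 < q) (hσ : 0 < σ) (hD : 0 < D) (hr : 0 ≤ r) (hrD : σ / q * r ^ q ≤ D)
    (hN : ⌈(2 * c * Mp * q ^ (((p : ℝ) + 1) / q) * σ ^ (-(((p : ℝ) + 1) / q))
        * D ^ (((p : ℝ) + 1 - q) / q)) ^ (2 / (3 * (p : ℝ) + 1))⌉₊ ≤ N)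
    (hF : F ≤ c * Mp * r ^ (p + 1) / (N : ℝ) ^ ((3 * (p : ℝ) + 1) / 2)) :
    F ≤ D / 2 := by
  set A := 2 * c * Mp * q ^ (((p : ℝ) + 1) / q) * σ ^ (-(((p : ℝ) + 1) / q))
    * D ^ (((p : ℝ) + 1 - q) / q)
  have hA : 0 < A := by positivity
  have hNA : A ≤ (N : ℝ) ^ ((3 * (p : ℝ) + 1) / 2) :=
    le_rpow_of_ceil_rpow_le hA.le (by positivity) (by field_simp) hN
  have hnum : c * Mp * r ^ (p + 1) ≤ A / 2 * D := by
    have hdist := rpow_le_of_growth_le (s := (p : ℝ) + 1) hq hσ hr (by positivity) hrD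
    rw [div_mul_rpow_div_eq hq hσ hD] at hdist
    have := mul_le_mul_of_nonneg_left hdist (mul_pos hc hMp).le
    exact_mod_cast (by linarith : c * Mp * r ^ ((p : ℝ) + 1) ≤ A / 2 * D)
  calc F ≤ c * Mp * r ^ (p + 1) / (N : ℝ) ^ ((3 * (p : ℝ) + 1) / 2) := hF
    _ ≤ A / 2 * D / A := div_le_div₀ (by positivity) hnum hA hNA
    _ = D / 2 := by field_simp

theorem restarted_tensor_method_convergence_general {n : ℕ} (p : ℕ) (Mp c : ℝ)
    (hMp : 0 < Mp) (hc : 0 < c)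
    (q σq : ℝ) (hq2 : 2 ≤ q) (hσ : 0 < σq)
    (f : EuclideanSpace ℝ (Fin n) → ℝ)
    (hucon : UniformlyConvexDeg q σq f)
    (xstar : EuclideanSpace ℝ (Fin n)) (hmin : ∀ w, f xstar ≤ f w)
    (z : ℕ → EuclideanSpace ℝ (Fin n)) (Δ0 : ℝ) (hΔ0 : 0 < Δ0)
    (hz0 : f (z 0) - f xstar ≤ Δ0)
    (N : ℕ → ℕ)
    (hN : ∀ k : ℕ, N k = max (⌈(2 * c * Mp * q ^ (((p : ℝ) + 1) / q)
        * σq ^ (-(((p : ℝ) + 1) / q))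
        * (Δ0 * 2 ^ (-(k : ℤ))) ^ (((p : ℝ) + 1 - q) / q)) ^ (2 / (3 * (p : ℝ) + 1))⌉₊) 1)
    (hzk : ∀ k : ℕ, f (z (k + 1)) - f xstar
        ≤ c * Mp * ‖z k - xstar‖ ^ (p + 1) / (N k : ℝ) ^ ((3 * (p : ℝ) + 1) / 2)) :
    ∀ k : ℕ, (σq / q) * ‖z k - xstar‖ ^ q ≤ f (z k) - f xstar ∧
      f (z k) - f xstar ≤ Δ0 * 2 ^ (-(k : ℤ)) := by
  have growth := hucon.growth_at_minimizer hmin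
  refine fun k => ⟨growth (z k), ?_⟩
  induction k with
  | zero => simpa using hz0
  | succ k ih =>
    have halve : Δ0 * 2 ^ (-((k + 1 : ℕ) : ℤ)) = Δ0 * 2 ^ (-(k : ℤ)) / 2 := by
      rw [Nat.cast_succ, neg_add, zpow_add₀ two_ne_zero, zpow_neg_one, ← mul_assoc, div_eq_mul_inv]
    rw [halve]
    exact restart_halves_gap hc hMp (by linarith) hσ (by positivity) (norm_nonneg _)
      ((growth (z k)).trans ih) ((hN k).symm ▸ le_max_left _ _) (hzk k)

/-- Theorem 3 (convergence of the Restarted Optimal Tensor Method, Algorithm 3):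
with `Δ_k = Δ_0 2^{-k}` and
`N_k = max{⌈(2 c M_p q^{(p+1)/q} σ_q^{-(p+1)/q} Δ_k^{(p+1-q)/q})^{2/(3p+1)}⌉, 1}`, if every
restart satisfies the Theorem 1 guarantee
`f(z_{k+1}) - f(x_*) ≤ c M_p ‖z_k - x_*‖^{p+1}/N_k^{(3p+1)/2}`, then for every `k`,
`(σ_q/q)‖z_k - x_*‖^q ≤ f(z_k) - f(x_*) ≤ Δ_0 2^{-k}`. -/
theorem restarted_tensor_method_convergence {n : ℕ} (p : ℕ) (hp : 1 ≤ p) (Mp c : ℝ)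
    (hMp : 0 < Mp) (hc : 0 < c)
    (q σq : ℝ) (hq2 : 2 ≤ q) (hqp : q ≤ (p : ℝ) + 1) (hσ : 0 < σq)
    (f : EuclideanSpace ℝ (Fin n) → ℝ) (hdiff : Differentiable ℝ f)
    (hucon : UniformlyConvexDeg q σq f)
    (xstar : EuclideanSpace ℝ (Fin n)) (hmin : ∀ w, f xstar ≤ f w)
    (z : ℕ → EuclideanSpace ℝ (Fin n)) (Δ0 : ℝ) (hΔ0 : 0 < Δ0)
    (hz0 : f (z 0) - f xstar ≤ Δ0)
    (N : ℕ → ℕ)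
    (hN : ∀ k : ℕ, N k = max (⌈(2 * c * Mp * q ^ (((p : ℝ) + 1) / q)
        * σq ^ (-(((p : ℝ) + 1) / q))
        * (Δ0 * 2 ^ (-(k : ℤ))) ^ (((p : ℝ) + 1 - q) / q)) ^ (2 / (3 * (p : ℝ) + 1))⌉₊) 1)
    (hzk : ∀ k : ℕ, f (z (k + 1)) - f xstar
        ≤ c * Mp * ‖z k - xstar‖ ^ (p + 1) / (N k : ℝ) ^ ((3 * (p : ℝ) + 1) / 2)) :
    ∀ k : ℕ, (σq / q) * ‖z k - xstar‖ ^ q ≤ f (z k) - f xstar ∧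
      f (z k) - f xstar ≤ Δ0 * 2 ^ (-(k : ℤ)) :=
  restarted_tensor_method_convergence_general p Mp c hMp hc q σq hq2 hσ f hucon xstar hmin z Δ0 hΔ0
    hz0 N hN hzk
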